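/- arXiv:1111.2516 — 3 statements merged into one kernel-verified Lean document; each statement's English description precedes it below -/
import Mathlib

section
/- For k ≥ 2 and a, b ∈ ℝ, the homogeneous polynomial p_{2k}(q₁,q₂) = Σ_{i=0}^{k} [∏_{j=0}^{i-1}(2k−1+2j(a−1))·∏_{j=0}^{k−1−i}(2k−1+2j(b−1))]·(k!/(i!(k−i)!(2k−1)))·q₁^{2i} q₂^{2(k−i)} satisfies the polynomial identity q₁q₂·(∂²₁₁ − ∂²₂₂)p_{2k} = (a q₁² − b q₂²)·∂²₁₂ p_{2k}. -/
/-!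
Write `p = ∑_{i+j=k} cᵢ q₁^{2i} q₂^{2j}` and let `E_{u,v} = u q₁∂₁ + v q₂∂₂`, which scales the
monomial `q₁ⁿ q₂ᵐ` by `u n + v m`. Since partial derivatives commute, the identity reads
`q₂ E_{1,b}(∂₁ p) = q₁ E_{a,1}(∂₂ p)`. Both sides are combinations of the monomials
`q₁^{2i+1} q₂^{2j+1}` with `i + j + 1 = k`, and comparing coefficients leaves the two-term recurrence
`c_{i+1} (2i+2) (2i+1+2bj) = cᵢ (2j+2) (2j+1+2ai)`. The coefficients of `p_{2k}` satisfy it because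
passing from `cᵢ` to `c_{i+1}` adds one factor `2j+1+2ai` to the first product, removes the factor
`2i+1+2bj` from the second, and changes the binomial coefficient by `(j+1)/(i+1)`.
-/

open MvPolynomial

/-- The coefficient of `q₁^{2i} q₂^{2(k-i)}` in the polynomial `p_{2k}`. -/
noncomputable def coefP (k : ℕ) (a b : ℝ) (i : ℕ) : ℝ :=
  (∏ j ∈ Finset.range i, ((2*(k:ℝ) - 1) + 2*(j:ℝ)*(a - 1))) *
  (∏ j ∈ Finset.range (k - i), ((2*(k:ℝ) - 1) + 2*(j:ℝ)*(b - 1))) *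
  ((Nat.factorial k : ℝ) / ((Nat.factorial i : ℝ) * (Nat.factorial (k - i) : ℝ) * (2*(k:ℝ) - 1)))

/-- The homogeneous polynomial `p_{2k}(q₁,q₂)` as a formal polynomial in two variables. -/
noncomputable def p2k (k : ℕ) (a b : ℝ) : MvPolynomial (Fin 2) ℝ :=
  ∑ i ∈ Finset.range (k + 1), C (coefP k a b i) * X 0 ^ (2*i) * X 1 ^ (2*(k - i))

open Finset

theorem MvPolynomial.pderiv_pderiv_comm {σ R : Type*} [CommRing R] (i j : σ)
    (p : MvPolynomial σ R) : pderiv i (pderiv j p) = pderiv j (pderiv i p) := by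
  have h : ⁅pderiv i, pderiv j⁆ = (0 : Derivation R (MvPolynomial σ R) (MvPolynomial σ R)) :=
    derivation_ext fun l => by
      classical
      rw [Derivation.commutator_apply]
      simp [pderiv_X, Pi.single_apply, apply_ite]
  rw [← sub_eq_zero, ← Derivation.commutator_apply, h, Derivation.zero_apply]

section BinaryForm

variable {R : Type*} [CommRing R]

noncomputable def evenBinaryForm (k : ℕ) (c : ℕ → R) : MvPolynomial (Fin 2) R :=
  ∑ p ∈ antidiagonal k, C (c p.1) * X 0 ^ (2 * p.1) * X 1 ^ (2 * p.2)

noncomputable def weightedEuler (u v : R) :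
    Derivation R (MvPolynomial (Fin 2) R) (MvPolynomial (Fin 2) R) :=
  (C u * X 0 : MvPolynomial (Fin 2) R) • pderiv 0 + (C v * X 1 : MvPolynomial (Fin 2) R) • pderiv 1

lemma pderiv_zero_C_mul_X_pow_succ (c : R) (n m : ℕ) :
    pderiv 0 (C c * X 0 ^ (n + 1) * X 1 ^ m : MvPolynomial (Fin 2) R) =
      C (c * (n + 1)) * X 0 ^ n * X 1 ^ m := by
  simp [pderiv_X]
  ring

lemma pderiv_one_C_mul_X_pow_succ (c : R) (n m : ℕ) :
    pderiv 1 (C c * X 0 ^ n * X 1 ^ (m + 1) : MvPolynomial (Fin 2) R) =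
      C (c * (m + 1)) * X 0 ^ n * X 1 ^ m := by
  simp [pderiv_X]
  ring

lemma weightedEuler_C_mul_X_pow (u v c : R) (n m : ℕ) :
    weightedEuler u v (C c * X 0 ^ n * X 1 ^ m) =
      C (c * (u * n + v * m)) * X 0 ^ n * X 1 ^ m := by
  set t : MvPolynomial (Fin 2) R := C c * X 0 ^ n * X 1 ^ m
  have ht : t = monomial (Finsupp.single 0 n + Finsupp.single 1 m) c := by
    rw [monomial_add_single, ← C_mul_X_pow_eq_monomial]
  calc weightedEuler u v t = C u * (X 0 * pderiv 0 t) + C v * (X 1 * pderiv 1 t) := by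
        simp only [weightedEuler, Derivation.add_apply, Derivation.smul_apply, smul_eq_mul,
          mul_assoc]
    _ = C u * (n • t) + C v * (m • t) := by
        rw [ht, X_mul_pderiv_monomial, X_mul_pderiv_monomial]
        simp
    _ = C (c * (u * n + v * m)) * X 0 ^ n * X 1 ^ m := by
        simp only [t, nsmul_eq_mul, map_mul, map_add, map_natCast]
        ring

lemma X_one_mul_weightedEuler_pderiv_zero (c b : R) (i j : ℕ) :
    X 1 * weightedEuler 1 b (pderiv 0 (C c * X 0 ^ (2 * (i + 1)) * X 1 ^ (2 * j))) =
      C (c * (2 * i + 2) * (2 * i + 1 + 2 * b * j)) * X 0 ^ (2 * i + 1) * X 1 ^ (2 * j + 1) := by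
  rw [show 2 * (i + 1) = 2 * i + 1 + 1 by ring, pderiv_zero_C_mul_X_pow_succ,
    weightedEuler_C_mul_X_pow]
  push_cast
  simp only [map_mul, map_add, map_ofNat, map_one, map_natCast]
  ring

lemma X_zero_mul_weightedEuler_pderiv_one (c a : R) (i j : ℕ) :
    X 0 * weightedEuler a 1 (pderiv 1 (C c * X 0 ^ (2 * i) * X 1 ^ (2 * (j + 1)))) =
      C (c * (2 * j + 2) * (2 * j + 1 + 2 * a * i)) * X 0 ^ (2 * i + 1) * X 1 ^ (2 * j + 1) := by
  rw [show 2 * (j + 1) = 2 * j + 1 + 1 by ring, pderiv_one_C_mul_X_pow_succ,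
    weightedEuler_C_mul_X_pow]
  push_cast
  simp only [map_mul, map_add, map_ofNat, map_one, map_natCast]
  ring

theorem evenBinaryForm_pderiv_identity {k : ℕ} {a b : R} {c : ℕ → R}
    (hc : ∀ i j, i + j + 1 = k →
      c (i + 1) * (2 * i + 2) * (2 * i + 1 + 2 * b * j) =
        c i * (2 * j + 2) * (2 * j + 1 + 2 * a * i)) :
    X 0 * X 1 * (pderiv 0 (pderiv 0 (evenBinaryForm k c)) -
        pderiv 1 (pderiv 1 (evenBinaryForm k c))) =
      (C a * X 0 ^ 2 - C b * X 1 ^ 2) * pderiv 0 (pderiv 1 (evenBinaryForm k c)) := by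
  suffices h : X 1 * weightedEuler 1 b (pderiv 0 (evenBinaryForm k c)) =
      X 0 * weightedEuler a 1 (pderiv 1 (evenBinaryForm k c)) by
    simp only [weightedEuler, Derivation.add_apply, Derivation.smul_apply, smul_eq_mul,
      map_one] at h
    rw [pderiv_pderiv_comm (1 : Fin 2) 0] at h
    linear_combination h
  rcases k with _ | n
  · simp [evenBinaryForm]
  · simp only [evenBinaryForm, map_sum, mul_sum]
    rw [Nat.sum_antidiagonal_succ, Nat.sum_antidiagonal_succ']
    have h0 : pderiv 0 (C (c 0) * X 0 ^ (2 * 0) * X 1 ^ (2 * (n + 1)) :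
        MvPolynomial (Fin 2) R) = 0 := by simp [pderiv_X]
    have h1 : pderiv 1 (C (c (n + 1)) * X 0 ^ (2 * (n + 1)) * X 1 ^ (2 * 0) :
        MvPolynomial (Fin 2) R) = 0 := by simp [pderiv_X]
    rw [h0, h1, map_zero, map_zero, mul_zero, mul_zero, zero_add, zero_add]
    refine sum_congr rfl fun ij hij => ?_
    obtain ⟨i, j⟩ := ij
    rw [X_one_mul_weightedEuler_pderiv_zero, X_zero_mul_weightedEuler_pderiv_one,
      hc i j (by rw [← mem_antidiagonal.mp hij])]

end BinaryForm

lemma p2k_eq_evenBinaryForm (k : ℕ) (a b : ℝ) : p2k k a b = evenBinaryForm k (coefP k a b) := by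
  rw [evenBinaryForm, Nat.sum_antidiagonal_eq_sum_range_succ_mk]
  rfl

lemma coefP_succ_recurrence (a b : ℝ) {i j k : ℕ} (h : i + j + 1 = k) :
    coefP k a b (i + 1) * (2 * i + 2) * (2 * i + 1 + 2 * b * j) =
      coefP k a b i * (2 * j + 2) * (2 * j + 1 + 2 * a * i) := by
  have hchoose : (k.choose (i + 1) : ℝ) * (i + 1) = k.choose i * (j + 1) := by
    have := Nat.choose_succ_right_eq k i
    rw [show k - i = j + 1 by omega] at this
    exact_mod_cast this
  have hfac : ∀ l ≤ k, (Nat.factorial k : ℝ) /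
      (Nat.factorial l * Nat.factorial (k - l) * (2 * k - 1)) = k.choose l / (2 * k - 1) :=
    fun l hl => by rw [Nat.cast_choose ℝ hl, div_div]
  unfold coefP
  rw [hfac i (by omega), hfac (i + 1) (by omega), show k - (i + 1) = j by omega,
    show k - i = j + 1 by omega, prod_range_succ, prod_range_succ]
  set P := ∏ l ∈ range i, (2 * (k : ℝ) - 1 + 2 * l * (a - 1))
  set Q := ∏ l ∈ range j, (2 * (k : ℝ) - 1 + 2 * l * (b - 1))
  subst h
  push_cast
  linear_combination (2 * P * Q * (2 * j + 1 + 2 * a * i) * (2 * i + 1 + 2 * b * j) /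
    (2 * (i + j + 1) - 1)) * hchoose

theorem stmt_8_general (k : ℕ) (a b : ℝ) :
    X 0 * X 1 * (pderiv 0 (pderiv 0 (p2k k a b)) - pderiv 1 (pderiv 1 (p2k k a b)))
    = (C a * X 0 ^ 2 - C b * X 1 ^ 2) * pderiv 0 (pderiv 1 (p2k k a b)) := by
  rw [p2k_eq_evenBinaryForm]
  exact evenBinaryForm_pderiv_identity fun i j h => coefP_succ_recurrence a b h

theorem stmt_8 (k : ℕ) (hk : 2 ≤ k) (a b : ℝ) :
    X 0 * X 1 * (pderiv 0 (pderiv 0 (p2k k a b)) - pderiv 1 (pderiv 1 (p2k k a b)))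
    = (C a * X 0 ^ 2 - C b * X 1 ^ 2) * pderiv 0 (pderiv 1 (p2k k a b)) :=
  stmt_8_general k a b
end

section
/- In ℝ^d (d ≥ 3), the Hessians of the homogeneous polynomials p₄(q) = Σᵢ qᵢ⁴ + c̃ Σ_{i<j} qᵢ²qⱼ² and p₆(q) = Σᵢ qᵢ⁶ + ã Σ_{i,j} qᵢ⁴qⱼ² + b̃ Σ_{i<j<k} qᵢ²qⱼ²q_k² commute at every point q ∈ ℝ^d, provided ã = 15c̃/(12−c̃) and b̃ = 75c̃²/((12−c̃)(3+c̃)), with c̃ ≠ 12 and c̃ ≠ −3. -/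
/-!
Both polynomials are symmetric functions of the squares: in the power sums `S_k = Σᵢ qᵢ^k`,
`p₄ = (1 - c/2) S₄ + (c/2) S₂²` and `p₆ = (1 - a + b/3) S₆ + (a - b/2) S₂ S₄ + (b/6) S₂³`.
Hence each Hessian is a diagonal matrix plus a symmetric matrix of rank at most two built from
`q` and `q³`, and the `(i, j)` entry of their commutator is `qᵢ qⱼ (qᵢ² - qⱼ²)` times a linear
form in `qᵢ² + qⱼ²` and `S₂`. Its two coefficients are combinations of `a (12 - c) - 15 c` and
`b (3 + c) - 5 c a`, both of which vanish for the stated `a` and `b`.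
-/

/-- Partial derivative of `f : (Fin d → ℝ) → ℝ` in the `i`-th coordinate direction. -/
noncomputable def pderivCoord {d : ℕ} (i : Fin d) (f : (Fin d → ℝ) → ℝ) :
    (Fin d → ℝ) → ℝ :=
  fun q => deriv (fun s => f (Function.update q i s)) (q i)

/-- Hessian matrix of `f` at the point `q`. -/
noncomputable def hessian {d : ℕ} (f : (Fin d → ℝ) → ℝ) (q : Fin d → ℝ) :
    Matrix (Fin d) (Fin d) ℝ :=
  fun i j => pderivCoord i (pderivCoord j f) q

/-- `p₄(q) = Σᵢ qᵢ⁴ + c̃ Σ_{j<i} qᵢ²qⱼ²`. -/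
def poly4 (d : ℕ) (c : ℝ) (q : Fin d → ℝ) : ℝ :=
  (∑ i, q i ^ 4) + c * ∑ i, ∑ j ∈ Finset.univ.filter (fun j => j < i), q i ^ 2 * q j ^ 2

/-- `p₆(q) = Σᵢ qᵢ⁶ + ã Σ_{i≠j} qᵢ⁴qⱼ² + b̃ Σ_{i<j<k} qᵢ²qⱼ²q_k²`. -/
def poly6 (d : ℕ) (a b : ℝ) (q : Fin d → ℝ) : ℝ :=
  (∑ i, q i ^ 6)
    + a * ∑ i, ∑ j ∈ Finset.univ.filter (fun j => j ≠ i), q i ^ 4 * q j ^ 2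
    + b * ∑ i, ∑ j ∈ Finset.univ.filter (fun j => j < i),
        ∑ k ∈ Finset.univ.filter (fun k => k < j), q i ^ 2 * q j ^ 2 * q k ^ 2

open Finset Function Matrix

namespace Finset

variable {α R : Type*} [LinearOrder α] [CommRing R]

theorem filter_lt_insert_of_forall_lt {s : Finset α} {a : α} (ha : ∀ x ∈ s, x < a) :
    (insert a s).filter (· < a) = s := by
  rw [filter_insert, if_neg (lt_irrefl a), filter_true_of_mem ha]

theorem filter_lt_insert_of_lt {s : Finset α} {a i : α} (hi : i < a) :
    (insert a s).filter (· < i) = s.filter (· < i) := by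
  rw [filter_insert, if_neg (asymm hi)]

theorem two_mul_sum_sum_filter_lt (s : Finset α) (x : α → R) :
    2 * ∑ i ∈ s, ∑ j ∈ s with j < i, x i * x j = (∑ i ∈ s, x i) ^ 2 - ∑ i ∈ s, x i ^ 2 := by
  induction s using Finset.induction_on_max with
  | empty => simp
  | insert a s ha ih =>
    have hna : a ∉ s := fun h => lt_irrefl a (ha a h)
    have outer (i : α) (hi : i ∈ s) :
        ∑ j ∈ insert a s with j < i, x i * x j = ∑ j ∈ s with j < i, x i * x j := by
      rw [filter_lt_insert_of_lt (ha i hi)]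
    rw [sum_insert hna, filter_lt_insert_of_forall_lt ha, sum_congr rfl outer, ← mul_sum,
      sum_insert hna, sum_insert hna]
    linear_combination ih

theorem six_mul_sum_sum_sum_filter_lt (s : Finset α) (x : α → R) :
    6 * ∑ i ∈ s, ∑ j ∈ s with j < i, ∑ k ∈ s with k < j, x i * x j * x k
      = (∑ i ∈ s, x i) ^ 3 - 3 * (∑ i ∈ s, x i) * (∑ i ∈ s, x i ^ 2) + 2 * ∑ i ∈ s, x i ^ 3 := by
  induction s using Finset.induction_on_max with
  | empty => simp
  | insert a s ha ih =>
    have hna : a ∉ s := fun h => lt_irrefl a (ha a h)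
    have inner (j : α) (hj : j ∈ s) :
        ∑ k ∈ insert a s with k < j, x a * x j * x k = x a * ∑ k ∈ s with k < j, x j * x k := by
      rw [filter_lt_insert_of_lt (ha j hj), mul_sum]
      exact sum_congr rfl fun k _ => by ring
    have outer (i : α) (hi : i ∈ s) :
        ∑ j ∈ insert a s with j < i, ∑ k ∈ insert a s with k < j, x i * x j * x k
          = ∑ j ∈ s with j < i, ∑ k ∈ s with k < j, x i * x j * x k := by
      rw [filter_lt_insert_of_lt (ha i hi)]
      exact sum_congr rfl fun j hj => by
        rw [filter_lt_insert_of_lt (ha j (mem_filter.mp hj).1)]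
    rw [sum_insert hna, filter_lt_insert_of_forall_lt ha, sum_congr rfl inner, ← mul_sum,
      sum_congr rfl outer, sum_insert hna, sum_insert hna, sum_insert hna]
    linear_combination ih + 3 * x a * two_mul_sum_sum_filter_lt s x

theorem sum_sum_filter_ne_mul {ι : Type*} [DecidableEq ι] (s : Finset ι) (x y : ι → R) :
    ∑ i ∈ s, ∑ j ∈ s with j ≠ i, x i * y j
      = (∑ i ∈ s, x i) * (∑ j ∈ s, y j) - ∑ i ∈ s, x i * y i := by
  rw [sum_mul, ← sum_sub_distrib]
  refine sum_congr rfl fun i hi => ?_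
  rw [filter_ne', sum_erase_eq_sub hi, mul_sum]

end Finset

def powerSum {ι : Type*} [Fintype ι] (k : ℕ) (q : ι → ℝ) : ℝ := ∑ i, q i ^ k

section Hessians

variable {d : ℕ}

theorem poly4_eq_powerSum (c : ℝ) :
    poly4 d c = fun q => (1 - c / 2) * powerSum 4 q + c / 2 * powerSum 2 q ^ 2 := by
  funext q
  have h := two_mul_sum_sum_filter_lt univ fun i => q i ^ 2
  simp only [← pow_mul] at h
  unfold poly4 powerSum
  linear_combination c / 2 * h

theorem poly6_eq_powerSum (a b : ℝ) :
    poly6 d a b = fun q => (1 - a + b / 3) * powerSum 6 q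
      + (a - b / 2) * powerSum 2 q * powerSum 4 q + b / 6 * powerSum 2 q ^ 3 := by
  funext q
  have h := six_mul_sum_sum_sum_filter_lt univ fun i => q i ^ 2
  simp only [← pow_mul] at h
  unfold poly6 powerSum
  rw [sum_sum_filter_ne_mul]
  simp only [← pow_add]
  linear_combination b / 6 * h

theorem pderivCoord_apply_of_hasDerivAt {i : Fin d} {f : (Fin d → ℝ) → ℝ} {q : Fin d → ℝ}
    {f' : ℝ} (h : HasDerivAt (fun s => f (update q i s)) f' (q i)) : pderivCoord i f q = f' :=
  h.deriv

theorem hasDerivAt_update_apply (q : Fin d → ℝ) (i j : Fin d) :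
    HasDerivAt (fun s => update q i s j) ((Pi.single i 1 : Fin d → ℝ) j) (q i) :=
  hasDerivAt_pi.1 (hasDerivAt_update q i (q i)) j

theorem hasDerivAt_powerSum_update (q : Fin d → ℝ) (i : Fin d) (k : ℕ) :
    HasDerivAt (fun s => powerSum k (update q i s)) (k * q i ^ (k - 1)) (q i) := by
  have hj (j : Fin d) : HasDerivAt (fun s => update q i s j ^ k)
      (k * q j ^ (k - 1) * (Pi.single i 1 : Fin d → ℝ) j) (q i) := by
    simpa using (hasDerivAt_update_apply q i j).fun_pow k
  simpa [powerSum, Pi.single_apply] using HasDerivAt.fun_sum fun j (_ : j ∈ univ) => hj j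

theorem pderivCoord_poly4 (c : ℝ) (j : Fin d) :
    pderivCoord j (poly4 d c)
      = fun q => (4 - 2 * c) * q j ^ 3 + 2 * c * q j * powerSum 2 q := by
  funext q
  rw [poly4_eq_powerSum]
  apply pderivCoord_apply_of_hasDerivAt
  refine (((hasDerivAt_powerSum_update q j 4).const_mul (1 - c / 2)).fun_add
    (((hasDerivAt_powerSum_update q j 2).fun_pow 2).const_mul (c / 2))).congr_deriv ?_
  rw [update_eq_self]
  ring

theorem pderivCoord_poly6 (a b : ℝ) (j : Fin d) :
    pderivCoord j (poly6 d a b) = fun q => (6 - 6 * a + 2 * b) * q j ^ 5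
      + (4 * a - 2 * b) * q j ^ 3 * powerSum 2 q + (2 * a - b) * q j * powerSum 4 q
      + b * q j * powerSum 2 q ^ 2 := by
  funext q
  rw [poly6_eq_powerSum]
  apply pderivCoord_apply_of_hasDerivAt
  have h2 := hasDerivAt_powerSum_update q j 2
  refine ((((hasDerivAt_powerSum_update q j 6).const_mul (1 - a + b / 3)).fun_add
    ((h2.const_mul (a - b / 2)).fun_mul (hasDerivAt_powerSum_update q j 4))).fun_add
    ((h2.fun_pow 3).const_mul (b / 6))).congr_deriv ?_
  rw [update_eq_self]
  ring

theorem hessian_poly4 (c : ℝ) (q : Fin d → ℝ) :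
    hessian (poly4 d c) q = diagonal (fun i => (12 - 6 * c) * q i ^ 2 + 2 * c * powerSum 2 q)
      + (4 * c) • vecMulVec q q := by
  ext i j
  change pderivCoord i (pderivCoord j (poly4 d c)) q = _
  have hj := hasDerivAt_update_apply q i j
  rw [pderivCoord_poly4, pderivCoord_apply_of_hasDerivAt
    (((hj.fun_pow 3).const_mul (4 - 2 * c)).fun_add
      ((hj.const_mul (2 * c)).fun_mul (hasDerivAt_powerSum_update q i 2)))]
  rcases eq_or_ne i j with rfl | hij
  · simp only [update_eq_self, Pi.single_eq_same, Matrix.add_apply, diagonal_apply_eq,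
      Matrix.smul_apply, vecMulVec_apply, smul_eq_mul]
    ring
  · simp only [update_eq_self, Pi.single_eq_of_ne hij.symm, Matrix.add_apply,
      diagonal_apply_ne _ hij, Matrix.smul_apply, vecMulVec_apply, smul_eq_mul]
    ring

theorem hessian_poly6 (a b : ℝ) (q : Fin d → ℝ) :
    hessian (poly6 d a b) q = diagonal (fun i => 30 * (1 - a + b / 3) * q i ^ 4
        + 12 * (a - b / 2) * powerSum 2 q * q i ^ 2 + 2 * (a - b / 2) * powerSum 4 q
        + b * powerSum 2 q ^ 2)
      + vecMulVec q (fun i => 8 * (a - b / 2) * q i ^ 3 + 2 * b * powerSum 2 q * q i)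
      + vecMulVec (fun i => 8 * (a - b / 2) * q i ^ 3 + 2 * b * powerSum 2 q * q i) q := by
  ext i j
  change pderivCoord i (pderivCoord j (poly6 d a b)) q = _
  have hj := hasDerivAt_update_apply q i j
  have h2 := hasDerivAt_powerSum_update q i 2
  rw [pderivCoord_poly6, pderivCoord_apply_of_hasDerivAt
    (((((hj.fun_pow 5).const_mul (6 - 6 * a + 2 * b)).fun_add
      (((hj.fun_pow 3).const_mul (4 * a - 2 * b)).fun_mul h2)).fun_add
      ((hj.const_mul (2 * a - b)).fun_mul (hasDerivAt_powerSum_update q i 4))).fun_add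
      ((hj.const_mul b).fun_mul (h2.fun_pow 2)))]
  rcases eq_or_ne i j with rfl | hij
  · simp only [update_eq_self, Pi.single_eq_same, Matrix.add_apply, diagonal_apply_eq,
      vecMulVec_apply]
    ring
  · simp only [update_eq_self, Pi.single_eq_of_ne hij.symm, Matrix.add_apply,
      diagonal_apply_ne _ hij, vecMulVec_apply]
    ring

theorem Matrix.diagonal_add_vecMulVec_commutator_apply {n R : Type*} [Fintype n] [DecidableEq n]
    [CommRing R] (e f u w : n → R) (r : R) (i j : n) :
    ((diagonal e + r • vecMulVec u u) * (diagonal f + vecMulVec u w + vecMulVec w u)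
      - (diagonal f + vecMulVec u w + vecMulVec w u) * (diagonal e + r • vecMulVec u u)) i j
    = (e i - e j) * (u i * w j + w i * u j) + r * u i * u j * (f j - f i)
      + r * (u ⬝ᵥ u) * (u i * w j - w i * u j) := by
  simp only [mul_add, add_mul, diagonal_mul_diagonal, smul_mul_assoc, mul_smul_comm,
    vecMulVec_mul, mul_vecMulVec, vecMulVec_mulVec, op_smul_eq_smul, smul_vecMulVec,
    dotProduct_comm w u, smul_add, Matrix.sub_apply, Matrix.add_apply, diagonal_apply,
    Matrix.smul_apply, vecMulVec_apply, vecMul_diagonal, mulVec_diagonal, smul_eq_mul]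
  split_ifs <;> ring

theorem hessian_poly4_poly6_commutator_apply (c a b : ℝ) (q : Fin d → ℝ) (i j : Fin d) :
    (hessian (poly4 d c) q * hessian (poly6 d a b) q
      - hessian (poly6 d a b) q * hessian (poly4 d c) q) i j
    = 8 * q i * q j * (q i ^ 2 - q j ^ 2) * ((a * (12 - c) - 15 * c) * (q i ^ 2 + q j ^ 2)
      + 2 * (b * (3 + c) - 5 * c * a) * (powerSum 2 q - q i ^ 2 - q j ^ 2)) := by
  have hS : q ⬝ᵥ q = powerSum 2 q := by simp [dotProduct, powerSum, sq]
  rw [hessian_poly4, hessian_poly6, diagonal_add_vecMulVec_commutator_apply, hS]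
  ring

end Hessians

theorem stmt_10_general (d : ℕ) (c a b : ℝ) (hc12 : c ≠ 12) (hc3 : c ≠ -3)
    (ha : a = 15 * c / (12 - c)) (hb : b = 75 * c ^ 2 / ((12 - c) * (3 + c))) :
    ∀ q : Fin d → ℝ,
      hessian (poly4 d c) q * hessian (poly6 d a b) q
        = hessian (poly6 d a b) q * hessian (poly4 d c) q := by
  have h12 : 12 - c ≠ 0 := sub_ne_zero.2 hc12.symm
  have h3 : 3 + c ≠ 0 := by contrapose! hc3; linear_combination hc3
  have ha' : a * (12 - c) - 15 * c = 0 := by rw [ha]; field_simp; ring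
  have hb' : b * (3 + c) - 5 * c * a = 0 := by rw [hb, ha]; field_simp; ring
  intro q
  rw [← sub_eq_zero]
  ext i j
  rw [hessian_poly4_poly6_commutator_apply, ha', hb', Matrix.zero_apply]
  ring

theorem stmt_10 (d : ℕ) (hd : 3 ≤ d) (c a b : ℝ) (hc12 : c ≠ 12) (hc3 : c ≠ -3)
    (ha : a = 15 * c / (12 - c)) (hb : b = 75 * c ^ 2 / ((12 - c) * (3 + c))) :
    ∀ q : Fin d → ℝ,
      hessian (poly4 d c) q * hessian (poly6 d a b) q
        = hessian (poly6 d a b) q * hessian (poly4 d c) q :=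
  stmt_10_general d c a b hc12 hc3 ha hb
end

section
/- If the d eigendirections of a symmetric matrix are pairwise orthogonal unit vectors h(λ₁),…,h(λ_d) with all components nonzero, then for each fixed n, Σ_{m ≠ n} γ^{(d,2)}_{mn} = −d(d−1)/2, where γ^{(d,2)}_{mn} = e₂(β_{mn,1},…,β_{mn,d}) with β_{mn,i} = h_m(λ_i)/h_n(λ_i). -/
/-- The `k`-th elementary symmetric polynomial of `d` real numbers. -/
def esym (d k : ℕ) (β : Fin d → ℝ) : ℝ :=
  ∑ s ∈ Finset.univ.powersetCard k, ∏ i ∈ s, β i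

theorem stmt_19 (d : ℕ) (h : Fin d → Fin d → ℝ)
    (horth : ∀ i j, (∑ m, h i m * h j m) = if i = j then 1 else 0)
    (hne : ∀ i m, h i m ≠ 0) (n : Fin d) :
    ∑ m ∈ Finset.univ.erase n, esym d 2 (fun i => h i m / h i n)
      = -(d * (d - 1) : ℝ) / 2 := by
  have key : ∀ s : Finset (Fin d), s.card = 2 →
      ∑ m, ∏ i ∈ s, (h i m / h i n) = 0 := by
    intro s hs
    obtain ⟨i, j, hij, rfl⟩ := Finset.card_eq_two.mp hs
    have : ∀ m, ∏ k ∈ ({i, j} : Finset (Fin d)), (h k m / h k n)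
        = (h i m * h j m) / (h i n * h j n) := by
      intro m
      rw [Finset.prod_pair hij, div_mul_div_comm]
    simp only [this]
    rw [← Finset.sum_div, horth, if_neg hij, zero_div]
  have hall : ∑ m, esym d 2 (fun i => h i m / h i n) = 0 := by
    unfold esym
    rw [Finset.sum_comm]
    refine Finset.sum_eq_zero fun s hs => ?_
    exact key s (Finset.mem_powersetCard.mp hs).2
  have hn : esym d 2 (fun i => h i n / h i n) = (d.choose 2 : ℝ) := by
    unfold esym
    have : ∀ s ∈ (Finset.univ : Finset (Fin d)).powersetCard 2,
        ∏ i ∈ s, (h i n / h i n) = 1 := by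
      intro s _
      exact Finset.prod_eq_one fun i _ => div_self (hne i n)
    rw [Finset.sum_congr rfl this, Finset.sum_const, Finset.card_powersetCard,
      Finset.card_univ, Fintype.card_fin, nsmul_eq_mul, mul_one]
  have := Finset.add_sum_erase _ (fun m => esym d 2 (fun i => h i m / h i n))
    (Finset.mem_univ n)
  beta_reduce at this
  rw [hall, hn] at this
  have h2 : (d.choose 2 : ℝ) = d * (d - 1) / 2 := Nat.cast_choose_two (K := ℝ) d
  linarith
end
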